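/- arXiv:1901.08400 — 2 statements merged into one kernel-verified Lean document; each statement's English description precedes it below -/
import Mathlib

section
/- If the variational encoder equals the true posterior, Q(h|v) = P(h|v), and the variational decoder equals the model joint, q(v,h) = P(v,h), then the AdVIL objective L₂ = Σ_v P_D(v) Σ_h Q(h|v)(E(v,h) + log Q(h|v)) - Σ_{v,h} q(v,h)(E(v,h) + log q(v,h)) equals the negative log-likelihood L = -Σ_v P_D(v) log P(v), where P(v) = Σ_h P(v,h). -/
/-!
Both optimal variational distributions are Gibbs distributions: `q = P` for the energy `E`, and
`Q v = P(· | v)` for the energy `E (v, ·)`. The free energy `∑ p (E + log p)` of a Gibbs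
distribution is minus the log of its partition function, so the objective becomes
`-∑ v, P_D v * log Z_v + log Z` with `Z_v = ∑ h, exp (-E (v, h))`, and `P v = Z_v / Z` turns this into the negative log-likelihood.
-/

open Real Finset

noncomputable def gibbs {α : Type*} [Fintype α] (E : α → ℝ) (s : α) : ℝ :=
  exp (-E s) / ∑ t, exp (-E t)

noncomputable def freeEnergy {α : Type*} [Fintype α] (E p : α → ℝ) : ℝ :=
  ∑ s, p s * (E s + log (p s))

section Gibbs

variable {α β : Type*} [Fintype α] [Fintype β]

lemma sum_exp_neg_pos [Nonempty α] (E : α → ℝ) : 0 < ∑ t, exp (-E t) :=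
  sum_pos (fun _ _ => exp_pos _) univ_nonempty

lemma sum_gibbs [Nonempty α] (E : α → ℝ) : ∑ s, gibbs E s = 1 := by
  simp only [gibbs, ← sum_div]
  exact div_self (sum_exp_neg_pos E).ne'

lemma energy_add_log_gibbs [Nonempty α] (E : α → ℝ) (s : α) :
    E s + log (gibbs E s) = -log (∑ t, exp (-E t)) := by
  rw [gibbs, log_div (exp_ne_zero _) (sum_exp_neg_pos E).ne', log_exp]
  ring

theorem freeEnergy_gibbs [Nonempty α] (E : α → ℝ) :
    freeEnergy E (gibbs E) = -log (∑ t, exp (-E t)) := by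
  simp only [freeEnergy, energy_add_log_gibbs, ← sum_mul, sum_gibbs, one_mul]

lemma sum_gibbs_prod_right (E : α × β → ℝ) (a : α) :
    ∑ b, gibbs E (a, b) = (∑ b, exp (-E (a, b))) / ∑ s, exp (-E s) := by
  simp only [gibbs, ← sum_div]

lemma gibbs_div_sum_gibbs_prod_right [Nonempty α] [Nonempty β] (E : α × β → ℝ) (a : α)
    (b : β) :
    gibbs E (a, b) / ∑ b', gibbs E (a, b') = gibbs (fun b' => E (a, b')) b := by
  have hZ := (sum_exp_neg_pos E).ne'
  have hZa := (sum_exp_neg_pos fun b' => E (a, b')).ne'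
  rw [sum_gibbs_prod_right, gibbs, gibbs]
  field_simp

end Gibbs

theorem advil_objective_tight_at_optimum_general
    {V H : Type*} [Fintype V] [Fintype H] [Nonempty V] [Nonempty H]
    (E : V × H → ℝ) (PD : V → ℝ) (hPDsum : ∑ v, PD v = 1)
    (Z : ℝ) (hZ : Z = ∑ v, ∑ h, Real.exp (-E (v, h)))
    (P : V × H → ℝ) (hP : ∀ s, P s = Real.exp (-E s) / Z)
    (Pv : V → ℝ) (hPv : ∀ v, Pv v = ∑ h, P (v, h))
    (Q : V → H → ℝ) (hQ : ∀ v h, Q v h = P (v, h) / Pv v)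
    (q : V × H → ℝ) (hq : ∀ s, q s = P s) :
    (∑ v, PD v * ∑ h, Q v h * (E (v, h) + Real.log (Q v h))) -
      (∑ v, ∑ h, q (v, h) * (E (v, h) + Real.log (q (v, h)))) =
    -(∑ v, PD v * Real.log (Pv v)) := by
  have hZ_prod : Z = ∑ s, exp (-E s) := by rw [hZ, Fintype.sum_prod_type]
  have hZ_pos : 0 < Z := hZ_prod ▸ sum_exp_neg_pos E
  have hP_gibbs : P = gibbs E := funext fun s => by rw [hP, hZ_prod, gibbs]
  have hq_gibbs : q = gibbs E := funext fun s => by rw [hq, hP_gibbs]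
  have hQ_gibbs (v : V) : Q v = gibbs fun h => E (v, h) := funext fun h => by
    rw [hQ, hPv, hP_gibbs, gibbs_div_sum_gibbs_prod_right]
  have hlog_Pv (v : V) : log (Pv v) = log (∑ h, exp (-E (v, h))) - log Z := by
    rw [hPv, hP_gibbs, sum_gibbs_prod_right, ← hZ_prod,
      log_div (sum_exp_neg_pos _).ne' hZ_pos.ne']
  have hencoder (v : V) :
      ∑ h, Q v h * (E (v, h) + log (Q v h)) = -log (∑ h, exp (-E (v, h))) := by
    rw [← freeEnergy_gibbs, ← hQ_gibbs]; rfl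
  have hdecoder : ∑ v, ∑ h, q (v, h) * (E (v, h) + log (q (v, h))) = -log Z := by
    rw [← Fintype.sum_prod_type (fun s => q s * (E s + log (q s))), hq_gibbs, hZ_prod]
    exact freeEnergy_gibbs E
  simp only [hencoder, hdecoder, hlog_Pv, mul_sub, mul_neg, sum_sub_distrib, ← sum_mul, hPDsum,
    sum_neg_distrib]
  ring

theorem advil_objective_tight_at_optimum
    {V H : Type*} [Fintype V] [Fintype H] [Nonempty V] [Nonempty H]
    (E : V × H → ℝ) (PD : V → ℝ) (hPD : ∀ v, 0 ≤ PD v) (hPDsum : ∑ v, PD v = 1)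
    (Z : ℝ) (hZ : Z = ∑ v, ∑ h, Real.exp (-E (v, h)))
    (P : V × H → ℝ) (hP : ∀ s, P s = Real.exp (-E s) / Z)
    (Pv : V → ℝ) (hPv : ∀ v, Pv v = ∑ h, P (v, h))
    (Q : V → H → ℝ) (hQ : ∀ v h, Q v h = P (v, h) / Pv v)
    (q : V × H → ℝ) (hq : ∀ s, q s = P s) :
    (∑ v, PD v * ∑ h, Q v h * (E (v, h) + Real.log (Q v h))) -
      (∑ v, ∑ h, q (v, h) * (E (v, h) + Real.log (q (v, h)))) =
    -(∑ v, PD v * Real.log (Pv v)) :=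
  advil_objective_tight_at_optimum_general E PD hPDsum Z hZ P hP Pv hPv Q hQ q hq
end

section
/- Let g, d ∈ ℝⁿ satisfy: ‖d‖₂ < ‖g‖₂ if ‖g‖₂ > 0, and ‖d‖₂ = 0 if ‖g‖₂ = 0. Then there exists a symmetric positive definite matrix H such that g - d = H g. -/
/-!
For `g ≠ 0` take the BFGS update of the identity along the pair `(g, v)`, `v = g - d`:
`H = I - g gᵀ / ⟪g, g⟫ + v vᵀ / ⟪v, g⟫`. It maps `g` to `v`, and its quadratic form is
`‖x - πx‖² + ⟪v, x⟫² / ⟪v, g⟫` with `π` the orthogonal projection onto `ℝ g`. The first term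
vanishes only on `ℝ g`, where the second is positive as soon as `⟪v, g⟫ > 0`; and
`⟪g - d, g⟫ > 0` follows from `‖d‖ < ‖g‖` by Cauchy–Schwarz. For `g = 0` also `d = 0`, and
`H = I` works.
-/

open Matrix

section DotProduct

variable {ι : Type*} [Fintype ι]

theorem sum_sq_eq_dotProduct_self (v : ι → ℝ) : ∑ i, v i ^ 2 = v ⬝ᵥ v := by
  simp only [dotProduct, sq]

theorem dotProduct_self_nonneg (v : ι → ℝ) : 0 ≤ v ⬝ᵥ v := by
  simpa using dotProduct_star_self_nonneg v

theorem dotProduct_self_pos {v : ι → ℝ} (hv : v ≠ 0) : 0 < v ⬝ᵥ v :=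
  (dotProduct_self_nonneg v).lt_of_ne' (dotProduct_self_eq_zero.not.2 hv)

theorem sq_dotProduct_le_mul (u v : ι → ℝ) : (u ⬝ᵥ v) ^ 2 ≤ (u ⬝ᵥ u) * (v ⬝ᵥ v) := by
  simpa only [dotProduct, sq] using Finset.sum_mul_sq_le_sq_mul_sq Finset.univ u v

theorem sub_dotProduct_pos_of_dotProduct_self_lt {g d : ι → ℝ} (h : d ⬝ᵥ d < g ⬝ᵥ g) :
    0 < (g - d) ⬝ᵥ g := by
  have hdg : (d ⬝ᵥ g) ^ 2 < (g ⬝ᵥ g) ^ 2 := by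
    nlinarith [sq_dotProduct_le_mul d g, dotProduct_self_nonneg d]
  rw [sub_dotProduct]
  linarith [le_abs_self (d ⬝ᵥ g), abs_lt_of_sq_lt_sq hdg (dotProduct_self_nonneg g)]

theorem dotProduct_self_sub_sq_div_eq (s x : ι → ℝ) :
    x ⬝ᵥ x - (s ⬝ᵥ x) ^ 2 / (s ⬝ᵥ s) =
      (x - ((s ⬝ᵥ x) / (s ⬝ᵥ s)) • s) ⬝ᵥ (x - ((s ⬝ᵥ x) / (s ⬝ᵥ s)) • s) := by
  rcases eq_or_ne s 0 with rfl | hs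
  · simp
  have := (dotProduct_self_pos hs).ne'
  simp only [sub_dotProduct, dotProduct_sub, smul_dotProduct, dotProduct_smul, smul_eq_mul,
    dotProduct_comm x s]
  field_simp
  ring

end DotProduct

namespace Matrix

variable {ι : Type*} [Fintype ι] [DecidableEq ι]

noncomputable def identityBFGSUpdate (s y : ι → ℝ) : Matrix ι ι ℝ :=
  1 - (s ⬝ᵥ s)⁻¹ • vecMulVec s s + (y ⬝ᵥ s)⁻¹ • vecMulVec y y

theorem identityBFGSUpdate_isSymm (s y : ι → ℝ) : (identityBFGSUpdate s y).IsSymm := by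
  simp [identityBFGSUpdate, IsSymm, transpose_vecMulVec]

theorem identityBFGSUpdate_mulVec (s y x : ι → ℝ) :
    identityBFGSUpdate s y *ᵥ x =
      x - ((s ⬝ᵥ x) / (s ⬝ᵥ s)) • s + ((y ⬝ᵥ x) / (y ⬝ᵥ s)) • y := by
  simp only [identityBFGSUpdate, add_mulVec, sub_mulVec, one_mulVec, smul_mulVec,
    vecMulVec_mulVec, op_smul_eq_smul, smul_smul, div_eq_inv_mul]

theorem identityBFGSUpdate_mulVec_self {s y : ι → ℝ} (h : y ⬝ᵥ s ≠ 0) :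
    identityBFGSUpdate s y *ᵥ s = y := by
  have hs : s ⬝ᵥ s ≠ 0 := by rintro hs; simp_all
  rw [identityBFGSUpdate_mulVec, div_self hs, div_self h]
  simp

theorem dotProduct_identityBFGSUpdate_mulVec (s y x : ι → ℝ) :
    x ⬝ᵥ (identityBFGSUpdate s y *ᵥ x) =
      x ⬝ᵥ x - (s ⬝ᵥ x) ^ 2 / (s ⬝ᵥ s) + (y ⬝ᵥ x) ^ 2 / (y ⬝ᵥ s) := by
  simp only [identityBFGSUpdate_mulVec, dotProduct_add, dotProduct_sub, dotProduct_smul,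
    smul_eq_mul, dotProduct_comm x s, dotProduct_comm x y]
  ring

theorem identityBFGSUpdate_posDef {s y : ι → ℝ} (h : 0 < y ⬝ᵥ s) :
    (identityBFGSUpdate s y).PosDef := by
  refine posDef_iff_dotProduct_mulVec.2
    ⟨isHermitian_iff_isSymm.2 (identityBFGSUpdate_isSymm s y), fun x hx => ?_⟩
  rw [star_trivial, dotProduct_identityBFGSUpdate_mulVec, dotProduct_self_sub_sq_div_eq]
  set t := (s ⬝ᵥ x) / (s ⬝ᵥ s)
  rcases eq_or_ne (x - t • s) 0 with hw | hw
  · have hxs : x = t • s := sub_eq_zero.1 hw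
    have ht : t ≠ 0 := by rintro ht; simp [ht, hxs] at hx
    have hyx : y ⬝ᵥ x ≠ 0 := by
      rw [hxs, dotProduct_smul, smul_eq_mul]; exact mul_ne_zero ht h.ne'
    rw [hw, dotProduct_zero, zero_add]
    positivity
  · have := dotProduct_self_pos hw
    positivity

end Matrix

theorem exists_spd_matrix_of_grad_condition
    {n : ℕ} (g d : Fin n → ℝ)
    (h₁ : 0 < Real.sqrt (∑ i, g i ^ 2) →
      Real.sqrt (∑ i, d i ^ 2) < Real.sqrt (∑ i, g i ^ 2))
    (h₂ : Real.sqrt (∑ i, g i ^ 2) = 0 → Real.sqrt (∑ i, d i ^ 2) = 0) :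
    ∃ M : Matrix (Fin n) (Fin n) ℝ, M.IsSymm ∧ M.PosDef ∧
      M.mulVec g = g - d := by
  simp only [sum_sq_eq_dotProduct_self, Real.sqrt_pos,
    Real.sqrt_eq_zero (dotProduct_self_nonneg _), Real.sqrt_lt_sqrt_iff (dotProduct_self_nonneg _),
    dotProduct_self_eq_zero] at h₁ h₂
  rcases eq_or_ne g 0 with rfl | hg
  · obtain rfl : d = 0 := h₂ rfl
    exact ⟨1, isSymm_one, PosDef.one, by simp⟩
  · have hpos := sub_dotProduct_pos_of_dotProduct_self_lt (h₁ (dotProduct_self_pos hg))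
    exact ⟨identityBFGSUpdate g (g - d), identityBFGSUpdate_isSymm _ _,
      identityBFGSUpdate_posDef hpos, identityBFGSUpdate_mulVec_self hpos.ne'⟩
end
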